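/- arXiv:1506.06538 — 6 statements merged into one kernel-verified Lean document; each statement's English description precedes it below -/
import Mathlib

section
/- The sequence (a_n) defined by a_0 = 0, a_1 = 1, and a_n = min{ k < n : k + a_k ≥ n } for n ≥ 2 satisfies a_{n+1} ∈ {a_n, a_n + 1} for all n ≥ 1; in particular it is monotone non-decreasing. -/
/-- The sequence defined by `a 0 = 0`, `a 1 = 1`, and for `n ≥ 2`,
`a n = min { k < n : m * k + a k ≥ n }` (for `m = 1` this is the sequence `a` of the paper). -/
noncomputable def jseq (m : ℕ) (n : ℕ) : ℕ :=
  Nat.strongRecOn n (fun n ih =>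
    if n = 0 then 0
    else if n = 1 then 1
    else sInf {k : ℕ | ∃ h : k < n, n ≤ m * k + ih k h})

/-! Monotonicity comes from minimality alone: `a (n+1)` is also a candidate for `a n` unless it
is already `≥ n > a n`. Monotonicity then makes `a n + 1` a candidate for `a (n+1)`, because
`m * (a n + 1) + a (a n + 1) ≥ m * a n + a (a n) + m ≥ n + 1`. -/

section

variable {m : ℕ}

lemma jseq_eq (m n : ℕ) : jseq m n =
    if n = 0 then 0 else if n = 1 then 1
    else sInf {k : ℕ | ∃ _ : k < n, n ≤ m * k + jseq m k} := by
  rw [jseq, Nat.strongRecOn_eq]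
  rfl

@[simp] lemma jseq_zero (m : ℕ) : jseq m 0 = 0 := by rw [jseq_eq]; rfl

@[simp] lemma jseq_one (m : ℕ) : jseq m 1 = 1 := by rw [jseq_eq]; rfl

lemma jseq_of_two_le {n : ℕ} (hn : 2 ≤ n) :
    jseq m n = sInf {k : ℕ | k < n ∧ n ≤ m * k + jseq m k} := by
  simp only [jseq_eq m n, if_neg (show n ≠ 0 by omega), if_neg (show n ≠ 1 by omega), exists_prop]

lemma jseq_le_of_lt {n k : ℕ} (hn : 2 ≤ n) (hk : k < n) (h : n ≤ m * k + jseq m k) :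
    jseq m n ≤ k := by
  rw [jseq_of_two_le hn]
  exact Nat.sInf_le ⟨hk, h⟩

lemma jseq_lt_and_le_of_pos_pred (hm : 0 < m) {n : ℕ} (hn : 2 ≤ n)
    (hpred : 0 < jseq m (n - 1)) :
    jseq m n < n ∧ n ≤ m * jseq m n + jseq m (jseq m n) := by
  have hcand : n ≤ m * (n - 1) + jseq m (n - 1) := by
    have := Nat.le_mul_of_pos_left (n - 1) hm
    omega
  rw [jseq_of_two_le hn]
  exact Nat.sInf_mem (s := {k | k < n ∧ n ≤ m * k + jseq m k}) ⟨n - 1, by omega, hcand⟩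

lemma jseq_pos (hm : 0 < m) {n : ℕ} (hn : 1 ≤ n) : 0 < jseq m n := by
  induction n using Nat.strong_induction_on with
  | _ n ih =>
    obtain rfl | hn2 : n = 1 ∨ 2 ≤ n := by omega
    · simp
    obtain ⟨-, hle⟩ := jseq_lt_and_le_of_pos_pred hm hn2 (ih (n - 1) (by omega) (by omega))
    by_contra! h0
    simp [Nat.le_zero.mp h0] at hle
    omega

lemma jseq_lt_and_le (hm : 0 < m) {n : ℕ} (hn : 2 ≤ n) :
    jseq m n < n ∧ n ≤ m * jseq m n + jseq m (jseq m n) :=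
  jseq_lt_and_le_of_pos_pred hm hn (jseq_pos hm (by omega))

lemma jseq_two (hm : 0 < m) : jseq m 2 = 1 := by
  have h1 : jseq m 2 ≤ 1 := jseq_le_of_lt le_rfl one_lt_two (by simp; omega)
  have h0 : 0 < jseq m 2 := jseq_pos hm one_le_two
  omega

lemma jseq_le_succ (hm : 0 < m) (n : ℕ) : jseq m n ≤ jseq m (n + 1) := by
  obtain rfl | rfl | hn := show n = 0 ∨ n = 1 ∨ 2 ≤ n by omega
  · simp
  · simp [jseq_two hm]
  obtain ⟨-, hsucc⟩ := jseq_lt_and_le hm (show 2 ≤ n + 1 by omega)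
  obtain ⟨hlt, -⟩ := jseq_lt_and_le hm hn
  rcases lt_or_ge (jseq m (n + 1)) n with h | h
  · exact jseq_le_of_lt hn h (by omega)
  · omega

lemma jseq_monotone (hm : 0 < m) : Monotone (jseq m) :=
  monotone_nat_of_le_succ (jseq_le_succ hm)

lemma jseq_succ_le (hm : 0 < m) {n : ℕ} (hn : 1 ≤ n) : jseq m (n + 1) ≤ jseq m n + 1 := by
  obtain rfl | hn := show n = 1 ∨ 2 ≤ n by omega
  · simp [jseq_two hm]
  obtain ⟨hlt, hle⟩ := jseq_lt_and_le hm hn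
  have hstep : jseq m (jseq m n) ≤ jseq m (jseq m n + 1) := jseq_le_succ hm _
  exact jseq_le_of_lt (by omega) (by omega) (by nlinarith)

end

/-- `a (n+1) ∈ {a n, a n + 1}` for all `n ≥ 1`; in particular `a` is monotone. -/
theorem jseq_succ_mem :
    (∀ n : ℕ, 1 ≤ n → jseq 1 (n + 1) = jseq 1 n ∨ jseq 1 (n + 1) = jseq 1 n + 1) ∧
      Monotone (jseq 1) := by
  refine ⟨fun n hn => ?_, jseq_monotone one_pos⟩
  have hlow := jseq_le_succ one_pos n
  have hhigh := jseq_succ_le one_pos hn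
  omega
end

section
/- For the sequence a with a_0 = 0, a_1 = 1, a_n = min{k < n : k + a_k ≥ n} (n ≥ 2): for every i ≥ 1, a_{i + a_i} = i. -/
/-!
For `m ≥ 1` the sequence is positive from `1` on and monotone, so `k ↦ m * k + a k` is strictly
increasing. Hence `i` is the least `k` with `m * k + a k ≥ m * i + a i`, which says
`a (m * i + a i) = i`.
-/

namespace jseq

variable {m : ℕ}

theorem eq_ite (m n : ℕ) : jseq m n =
    if n = 0 then 0 else if n = 1 then 1
    else sInf {k : ℕ | k < n ∧ n ≤ m * k + jseq m k} := by
  rw [jseq, Nat.strongRecOn, WellFounded.fix_eq]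
  simp only [exists_prop]
  rfl

@[simp]
theorem zero (m : ℕ) : jseq m 0 = 0 := by
  rw [eq_ite]; simp

@[simp]
theorem one (m : ℕ) : jseq m 1 = 1 := by
  rw [eq_ite]; simp

theorem eq_sInf {n : ℕ} (hn : 2 ≤ n) :
    jseq m n = sInf {k : ℕ | k < n ∧ n ≤ m * k + jseq m k} := by
  rw [eq_ite, if_neg (by omega), if_neg (by omega)]

theorem le_of_le_mul_add {n k : ℕ} (hn : 2 ≤ n) (hk : k < n) (h : n ≤ m * k + jseq m k) :
    jseq m n ≤ k := by
  rw [eq_sInf hn]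
  exact Nat.sInf_le ⟨hk, h⟩

theorem sub_one_mem (hm : 1 ≤ m) {n : ℕ} (hn : 2 ≤ n) (h : 1 ≤ jseq m (n - 1)) :
    n - 1 ∈ {k : ℕ | k < n ∧ n ≤ m * k + jseq m k} := by
  have := Nat.le_mul_of_pos_left (n - 1) hm
  exact ⟨by omega, by omega⟩

theorem one_le (hm : 1 ≤ m) {n : ℕ} (hn : 1 ≤ n) : 1 ≤ jseq m n := by
  induction n using Nat.strong_induction_on with
  | _ n ih =>
    obtain rfl | hn2 := hn.eq_or_lt
    · simp
    -- `n - 1` is admissible by induction, so the infimum is attained; `0` is not admissible.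
    have hmem := Nat.sInf_mem ⟨_, sub_one_mem hm hn2 (ih (n - 1) (by omega) (by omega))⟩
    rw [eq_sInf hn2]
    by_contra! h0
    rw [Nat.lt_one_iff.mp h0] at hmem
    simp only [Set.mem_ofPred_eq, mul_zero, zero, add_zero] at hmem
    omega

theorem lt_self_and_le_mul_add (hm : 1 ≤ m) {n : ℕ} (hn : 2 ≤ n) :
    jseq m n < n ∧ n ≤ m * jseq m n + jseq m (jseq m n) := by
  rw [eq_sInf hn]
  exact Nat.sInf_mem ⟨_, sub_one_mem hm hn (one_le hm (by omega))⟩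

theorem monotone (hm : 1 ≤ m) : Monotone (jseq m) := by
  refine monotone_nat_of_le_succ fun n => ?_
  rcases n with _ | _ | n
  · simp
  · simpa using one_le hm (n := 2) (by omega)
  · show jseq m (n + 2) ≤ jseq m (n + 3)
    obtain ⟨-, hle⟩ := lt_self_and_le_mul_add hm (n := n + 3) (by omega)
    rcases Nat.lt_or_ge (jseq m (n + 3)) (n + 2) with hs | hs
    · exact le_of_le_mul_add (by omega) hs (by omega)
    · exact ((lt_self_and_le_mul_add hm (n := n + 2) (by omega)).1.trans_le hs).le

theorem mul_add_self (hm : 1 ≤ m) {i : ℕ} (hi : 1 ≤ i) : jseq m (m * i + jseq m i) = i := by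
  have hai := one_le hm hi
  have hmi : i ≤ m * i := Nat.le_mul_of_pos_left i hm
  obtain ⟨-, hle⟩ := lt_self_and_le_mul_add hm (n := m * i + jseq m i) (by omega)
  refine le_antisymm (le_of_le_mul_add (by omega) (by omega) le_rfl) (not_lt.mp fun hs => ?_)
  have := monotone hm hs.le
  have := Nat.mul_lt_mul_of_pos_left hs hm
  omega

end jseq

/-- For every `i ≥ 1`, `a (i + a i) = i`. -/
theorem jseq_add_self (i : ℕ) (hi : 1 ≤ i) : jseq 1 (i + jseq 1 i) = i := by
  simpa using jseq.mul_add_self le_rfl hi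
end

section
/- In the infinite Jaco graph J_∞(f) for f(x) = mx + c (m ≥ 1, c ≥ 0), for every vertex v_n the sum of its out-degree and in-degree equals f(n) = m·n + c. -/
/-! The out-neighbours of `v_i` form the interval `(i, f(i) + i - d⁻(v_i)]`, so
`d⁺(v_i) = f(i) - d⁻(v_i)` as soon as `d⁻(v_i) ≤ f(i)`; and this holds because the in-neighbours
of `v_i` lie among `v_1, …, v_{i-1}` while `i ≤ m * i`. -/

/-- In-degree of vertex `j` in the infinite linear Jaco graph for `f x = m * x + c`:
`d⁻(v_j)` is the number of tails `1 ≤ i < j` with `f i + i - d⁻(v_i) ≥ j`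
(stated subtraction-free as `j + d⁻(v_i) ≤ m * i + c + i`). -/
noncomputable def jacoIndeg (m c : ℕ) (j : ℕ) : ℕ :=
  Nat.strongRecOn j (fun j ih =>
    ((Finset.Ico 1 j).attach.filter (fun i =>
      j + ih i.1 (Finset.mem_Ico.mp i.2).2 ≤ m * i.1 + c + i.1)).card)

/-- `(v_i, v_j)` is an arc of the infinite Jaco graph `J_∞(mx + c)` iff `1 ≤ i < j` and
`f(i) + i - d⁻(v_i) ≥ j`. -/
def JacoArc (m c i j : ℕ) : Prop :=
  1 ≤ i ∧ i < j ∧ j + jacoIndeg m c i ≤ m * i + c + i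

noncomputable instance (m c i j : ℕ) : Decidable (JacoArc m c i j) := by
  unfold JacoArc; infer_instance

/-- Out-degree of `v_i` in the infinite Jaco graph `J_∞(mx + c)`. -/
noncomputable def jacoOutdegInf (m c i : ℕ) : ℕ := {j | JacoArc m c i j}.ncard

/-- Out-degree of `v_i` in the finite Jaco graph `J_n(mx + c)`. -/
noncomputable def jacoOutdeg (m c n i : ℕ) : ℕ :=
  ((Finset.Icc 1 n).filter (fun j => JacoArc m c i j)).card

/-- Total degree of `v_i` in the underlying graph of `J_n(mx + c)`
(for `i ≤ n` the in-degree in `J_n` agrees with that in `J_∞`). -/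
noncomputable def jacoDeg (m c n i : ℕ) : ℕ := jacoIndeg m c i + jacoOutdeg m c n i

/-- Number of arcs of the finite Jaco graph `J_n(mx + c)`. -/
noncomputable def jacoArcs (m c n : ℕ) : ℕ :=
  (((Finset.Icc 1 n) ×ˢ (Finset.Icc 1 n)).filter (fun p => JacoArc m c p.1 p.2)).card

lemma jacoIndeg_eq_card_filter_jacoArc (m c j : ℕ) :
    jacoIndeg m c j = ((Finset.Ico 1 j).filter (fun i => JacoArc m c i j)).card := by
  rw [jacoIndeg, Nat.strongRecOn_eq]
  change ((Finset.Ico 1 j).attach.filter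
    (fun i : Finset.Ico 1 j => j + jacoIndeg m c i ≤ m * i + c + i)).card = _
  rw [Finset.filter_attach (fun i => j + jacoIndeg m c i ≤ m * i + c + i), Finset.card_map,
    Finset.card_attach]
  congr 1
  refine Finset.filter_congr fun i hi => ?_
  rw [Finset.mem_Ico] at hi
  simp only [JacoArc, hi, true_and]

lemma jacoIndeg_le_sub_one (m c j : ℕ) : jacoIndeg m c j ≤ j - 1 := by
  rw [jacoIndeg_eq_card_filter_jacoArc, ← Nat.card_Ico]
  exact Finset.card_filter_le _ _

lemma setOf_jacoArc_eq_Ioc (m c i : ℕ) (hi : 1 ≤ i) :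
    {j | JacoArc m c i j} = ↑(Finset.Ioc i (m * i + c + i - jacoIndeg m c i)) := by
  ext j
  simp only [JacoArc, Set.mem_ofPred_eq, Finset.coe_Ioc, Set.mem_Ioc]
  omega

lemma jacoOutdegInf_eq (m c i : ℕ) (hi : 1 ≤ i) :
    jacoOutdegInf m c i = m * i + c - jacoIndeg m c i := by
  rw [jacoOutdegInf, setOf_jacoArc_eq_Ioc m c i hi, Set.ncard_coe_finset, Nat.card_Ioc]
  omega

/-- In `J_∞(mx + c)`, `d⁺(v_n) + d⁻(v_n) = m * n + c` for every vertex `v_n`. -/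
theorem jaco_deg_sum (m c n : ℕ) (hm : 1 ≤ m) (hn : 1 ≤ n) :
    jacoOutdegInf m c n + jacoIndeg m c n = m * n + c := by
  have hindeg : jacoIndeg m c n ≤ m * n + c :=
    calc jacoIndeg m c n ≤ n - 1 := jacoIndeg_le_sub_one m c n
      _ ≤ m * n := (Nat.sub_le n 1).trans (Nat.le_mul_of_pos_left n hm)
      _ ≤ m * n + c := Nat.le_add_right _ _
  rw [jacoOutdegInf_eq m c n hn, Nat.sub_add_cancel hindeg]
end

section
/- In the infinite Jaco graph J_∞(f) for f(x) = mx + c (m ≥ 1, c ≥ 0), if (v_i, v_k) is an arc and i < j < k, then (v_j, v_k) is also an arc (heads receive arcs from a contiguous interval of tails). -/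
/-! The in-degree rises by at most one from each vertex to the next, so
`d⁻(v_j) ≤ d⁻(v_i) + (j - i)`, while `f(x) + x` rises by `(m + 1)(j - i)`. Hence the arc budget
`f(x) + x - d⁻(v_x)` of a tail does not decrease as the tail moves from `v_i` to `v_j`, and still
reaches `k`. -/

open Finset

lemma jacoIndeg_eq_card (m c j : ℕ) :
    jacoIndeg m c j = #{i ∈ Ico 1 j | j + jacoIndeg m c i ≤ m * i + c + i} := by
  rw [jacoIndeg, Nat.strongRecOn, WellFounded.fix_eq]
  change #{i ∈ (Ico 1 j).attach | j + jacoIndeg m c i.1 ≤ m * i.1 + c + i.1} = _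
  rw [filter_attach (fun i => j + jacoIndeg m c i ≤ m * i + c + i), card_map, card_attach]

/-- Every tail of `v_(j+1)` other than `v_j` is already a tail of `v_j`. -/
lemma jacoIndeg_succ_le (m c j : ℕ) : jacoIndeg m c (j + 1) ≤ jacoIndeg m c j + 1 := by
  rw [jacoIndeg_eq_card m c (j + 1), jacoIndeg_eq_card m c j]
  calc #{i ∈ Ico 1 (j + 1) | j + 1 + jacoIndeg m c i ≤ m * i + c + i}
      ≤ #(insert j {i ∈ Ico 1 j | j + jacoIndeg m c i ≤ m * i + c + i}) := by
        refine card_le_card fun i hi => ?_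
        simp only [mem_filter, mem_Ico, mem_insert] at hi ⊢
        omega
    _ ≤ _ := card_insert_le _ _

lemma jacoIndeg_add_le (m c i n : ℕ) : jacoIndeg m c (i + n) ≤ jacoIndeg m c i + n := by
  induction n with
  | zero => rfl
  | succ n ih => exact (jacoIndeg_succ_le m c (i + n)).trans (by omega)

/-- In `J_∞(mx + c)`, if `(v_i, v_k)` is an arc and `i < j < k` then `(v_j, v_k)` is an arc. -/
theorem jaco_arc_interval (m c i j k : ℕ) (hm : 1 ≤ m)
    (h : JacoArc m c i k) (hij : i < j) (hjk : j < k) :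
    JacoArc m c j k := by
  obtain ⟨-, -, hik⟩ := h
  obtain ⟨n, rfl⟩ := Nat.exists_eq_add_of_lt hij
  have hindeg := jacoIndeg_add_le m c i (n + 1)
  have hgrowth : m * i + (n + 1) ≤ m * (i + (n + 1)) := by nlinarith
  rw [add_assoc] at hjk ⊢
  exact ⟨by omega, hjk, by omega⟩
end

section
/- For f(x) = mx + c with m ≥ 1, c ≥ 0, the underlying graph of the finite Jaco graph J_{f(1)+1}(f) is the complete graph K_{m+c+1}; consequently, for all i with 1 ≤ i ≤ f(1)+1, the maximum degree of J_i(f) is i−1 and every vertex attains it. -/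
/-
While `j ≤ m + c + 1`, every earlier vertex `v_i` has in-degree `i - 1` (strong induction), so its
reach `f(i) + i - d⁻(v_i) = m i + c + 1` is at least `m + c + 1 ≥ j`: every pair of vertices in the
initial segment is joined by an arc. In `J_i` the vertex `v_v` therefore has in-degree `v - 1` and
out-degree `i - v`.
-/

lemma jacoIndeg_eq_card_filter (m c j : ℕ) :
    jacoIndeg m c j =
      ((Finset.Ico 1 j).filter (fun i => j + jacoIndeg m c i ≤ m * i + c + i)).card := by
  have hrec : jacoIndeg m c j = ((Finset.Ico 1 j).attach.filter (fun i =>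
      j + jacoIndeg m c i.1 ≤ m * i.1 + c + i.1)).card := by
    rw [jacoIndeg, Nat.strongRecOn, WellFounded.fix_eq]
    rfl
  rw [hrec, Finset.card_filter, Finset.card_filter,
    Finset.sum_attach (Finset.Ico 1 j)
      (f := fun i => if j + jacoIndeg m c i ≤ m * i + c + i then 1 else 0)]

theorem jacoIndeg_eq_sub_one {m c j : ℕ} (hj : j ≤ m + c + 1) : jacoIndeg m c j = j - 1 := by
  induction j using Nat.strongRecOn with
  | _ j ih =>
    have all_tails : (Finset.Ico 1 j).filter (fun i => j + jacoIndeg m c i ≤ m * i + c + i)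
        = Finset.Ico 1 j := by
      refine Finset.filter_true_of_mem fun i hi => ?_
      obtain ⟨hi1, hij⟩ := Finset.mem_Ico.mp hi
      rw [ih i hij (hij.le.trans hj)]
      have : m ≤ m * i := Nat.le_mul_of_pos_right m hi1
      omega
    rw [jacoIndeg_eq_card_filter, all_tails, Nat.card_Ico]

theorem jacoArc_of_le {m c i j : ℕ} (hi : 1 ≤ i) (hij : i < j) (hj : j ≤ m + c + 1) :
    JacoArc m c i j := by
  refine ⟨hi, hij, ?_⟩
  rw [jacoIndeg_eq_sub_one (by omega)]
  have : m ≤ m * i := Nat.le_mul_of_pos_right m hi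
  omega

theorem jacoOutdeg_eq_sub {m c n v : ℕ} (hv : 1 ≤ v) (hn : n ≤ m + c + 1) :
    jacoOutdeg m c n v = n - v := by
  have out_nbrs : (Finset.Icc 1 n).filter (fun j => JacoArc m c v j) = Finset.Ioc v n := by
    ext j
    simp only [Finset.mem_filter, Finset.mem_Icc, Finset.mem_Ioc]
    constructor
    · rintro ⟨⟨-, hjn⟩, -, hvj, -⟩
      exact ⟨hvj, hjn⟩
    · rintro ⟨hvj, hjn⟩
      exact ⟨⟨by omega, hjn⟩, jacoArc_of_le hv hvj (hjn.trans hn)⟩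
  rw [jacoOutdeg, out_nbrs, Nat.card_Ioc]

theorem jaco_initial_complete_general (m c : ℕ) :
    (∀ i j : ℕ, 1 ≤ i → i < j → j ≤ m + c + 1 → JacoArc m c i j) ∧
      (∀ i : ℕ, 1 ≤ i → i ≤ m + c + 1 →
        ∀ v : ℕ, 1 ≤ v → v ≤ i → jacoDeg m c i v = i - 1) := by
  refine ⟨fun i j hi hij hj => jacoArc_of_le hi hij hj, fun i _ hi v hv hvi => ?_⟩
  rw [jacoDeg, jacoIndeg_eq_sub_one (by omega), jacoOutdeg_eq_sub hv hi]
  omega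

/-- `J_{f(1)+1}(mx+c)` is the complete graph `K_{m+c+1}`; consequently for
`1 ≤ i ≤ f(1)+1 = m+c+1`, every vertex of `J_i` has degree `i - 1`
(so `Δ(J_i) = i - 1` and every vertex is Jaconian). -/
theorem jaco_initial_complete (m c : ℕ) (hm : 1 ≤ m) :
    (∀ i j : ℕ, 1 ≤ i → i < j → j ≤ m + c + 1 → JacoArc m c i j) ∧
      (∀ i : ℕ, 1 ≤ i → i ≤ m + c + 1 →
        ∀ v : ℕ, 1 ≤ v → v ≤ i → jacoDeg m c i v = i - 1) :=
  jaco_initial_complete_general m c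
end

section
/- In a linear Jaco graph with f(x) = mx + c, if vertices v_i and v_{i+1} both attain full degree (d(v_i) = f(i) and d(v_{i+1}) = f(i+1)), and i', j' are the maximal indices such that arcs (v_i, v_{i'}) and (v_{i+1}, v_{j'}) exist, then j' − i' ∈ {m, m+1}. -/
/-! Write `N(i) = f(i) + i - d⁻(v_i)` for the largest head of an arc out of `v_i`. Full degree
of `v_i` in `J_n` forces `N(i) ≤ n`, so the maximal heads are `i' = N(i)` and `j' = N(i+1)`.
Passing from `v_i` to `v_{i+1}`, the in-degree gains the tail `v_i` and loses the tails `v_t` of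
`v_i` with `N(t) = i`; as `N` is strictly increasing there is at most one of them. Hence
`N(i+1) = N(i) + m + #{t | N(t) = i}` with the last term at most one. -/

open Finset

lemma jacoIndeg_eq_card_arcs (m c j : ℕ) :
    jacoIndeg m c j = #{i ∈ Ico 1 j | JacoArc m c i j} := by
  have hrec : jacoIndeg m c j =
      #((Ico 1 j).attach.filter fun i => j + jacoIndeg m c i.1 ≤ m * i.1 + c + i.1) := by
    rw [jacoIndeg, Nat.strongRecOn_eq]
    rfl
  rw [hrec, filter_attach (fun i => j + jacoIndeg m c i ≤ m * i + c + i), card_map, card_attach]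
  congr 1
  refine filter_congr fun i hi => ?_
  rw [mem_Ico] at hi
  simp only [JacoArc, hi, true_and]

lemma jacoIndeg_le_self (m c j : ℕ) : jacoIndeg m c j ≤ j := by
  rw [jacoIndeg_eq_card_arcs]
  exact (card_filter_le _ _).trans (by simp)

noncomputable def jacoMaxHead (m c i : ℕ) : ℕ := m * i + c + i - jacoIndeg m c i

lemma jacoIndeg_add_jacoMaxHead (m c i : ℕ) :
    jacoIndeg m c i + jacoMaxHead m c i = m * i + c + i := by
  have := jacoIndeg_le_self m c i
  unfold jacoMaxHead
  omega

lemma jacoArc_iff {m c i j : ℕ} :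
    JacoArc m c i j ↔ 1 ≤ i ∧ i < j ∧ j ≤ jacoMaxHead m c i := by
  have := jacoIndeg_add_jacoMaxHead m c i
  unfold JacoArc
  omega

lemma jacoIndeg_eq_card_le_jacoMaxHead (m c j : ℕ) :
    jacoIndeg m c j = #{i ∈ Ico 1 j | j ≤ jacoMaxHead m c i} := by
  rw [jacoIndeg_eq_card_arcs]
  congr 1
  refine filter_congr fun i hi => ?_
  rw [mem_Ico] at hi
  simp only [jacoArc_iff, hi, true_and]

lemma jacoIndeg_succ_add_card_jacoMaxHead_eq (m c j : ℕ) :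
    jacoIndeg m c (j + 1) + #{i ∈ Ico 1 j | jacoMaxHead m c i = j} =
      jacoIndeg m c j + if JacoArc m c j (j + 1) then 1 else 0 := by
  rcases Nat.eq_zero_or_pos j with rfl | hj
  · rw [jacoIndeg_eq_card_arcs m c 0, jacoIndeg_eq_card_arcs m c (0 + 1)]
    simp [JacoArc]
  have hsplit : #{i ∈ Ico 1 j | j ≤ jacoMaxHead m c i} =
      #{i ∈ Ico 1 j | j + 1 ≤ jacoMaxHead m c i} + #{i ∈ Ico 1 j | jacoMaxHead m c i = j} := by
    rw [← card_filter_add_card_filter_not (p := fun i => j + 1 ≤ jacoMaxHead m c i), filter_filter,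
      filter_filter]
    congr 2 <;> refine filter_congr fun i _ => ?_ <;> omega
  rw [jacoIndeg_eq_card_le_jacoMaxHead m c j, hsplit, jacoIndeg_eq_card_le_jacoMaxHead,
    Nat.Ico_succ_right_eq_insert_Ico (show 1 ≤ j from hj), filter_insert]
  by_cases harc : JacoArc m c j (j + 1)
  · rw [jacoArc_iff] at harc
    rw [if_pos harc.2.2, card_insert_of_notMem (by simp), if_pos (jacoArc_iff.2 harc)]
    omega
  · rw [jacoArc_iff] at harc
    rw [if_neg (by omega), if_neg (by rwa [jacoArc_iff])]
    omega

lemma jacoMaxHead_strictMono {m : ℕ} (c : ℕ) (hm : 1 ≤ m) : StrictMono (jacoMaxHead m c) := by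
  refine strictMono_nat_of_lt_succ fun j => ?_
  have := jacoIndeg_add_jacoMaxHead m c j
  have := jacoIndeg_add_jacoMaxHead m c (j + 1)
  have := jacoIndeg_succ_le m c j
  rw [mul_add_one] at *
  omega

lemma jacoMaxHead_succ {m c j : ℕ} (hm : 1 ≤ m) (harc : JacoArc m c j (j + 1)) :
    jacoMaxHead m c (j + 1) = jacoMaxHead m c j + m ∨
      jacoMaxHead m c (j + 1) = jacoMaxHead m c j + m + 1 := by
  have hcard : #{i ∈ Ico 1 j | jacoMaxHead m c i = j} ≤ 1 :=
    card_le_one.2 fun a ha b hb => (jacoMaxHead_strictMono c hm).injective <| by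
      rw [(mem_filter.1 ha).2, (mem_filter.1 hb).2]
  have := jacoIndeg_succ_add_card_jacoMaxHead_eq m c j
  have := jacoIndeg_add_jacoMaxHead m c j
  have := jacoIndeg_add_jacoMaxHead m c (j + 1)
  rw [if_pos harc, mul_add_one] at *
  omega

lemma jacoOutdeg_eq {m c n t : ℕ} (ht : 1 ≤ t) :
    jacoOutdeg m c n t = min n (jacoMaxHead m c t) - t := by
  have : {j ∈ Icc 1 n | JacoArc m c t j} = Ioc t (min n (jacoMaxHead m c t)) := by
    ext j
    simp only [mem_filter, mem_Icc, mem_Ioc, jacoArc_iff]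
    omega
  rw [jacoOutdeg, this, Nat.card_Ioc]

lemma jacoMaxHead_le_of_jacoDeg_eq {m c n i j : ℕ} (harc : JacoArc m c i j)
    (hdeg : jacoDeg m c n i = m * i + c) : jacoMaxHead m c i ≤ n := by
  rw [jacoArc_iff] at harc
  have := jacoIndeg_add_jacoMaxHead m c i
  rw [jacoDeg, jacoOutdeg_eq harc.1] at hdeg
  omega

lemma eq_jacoMaxHead_of_forall_le {m c n i j : ℕ} (harc : JacoArc m c i j)
    (hn : jacoMaxHead m c i ≤ n) (hmax : ∀ t ≤ n, JacoArc m c i t → t ≤ j) :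
    j = jacoMaxHead m c i := by
  rw [jacoArc_iff] at harc
  have := hmax _ hn (jacoArc_iff.2 ⟨harc.1, by omega, le_rfl⟩)
  omega

theorem jaco_full_degree_heads_general (m c n i i' j' : ℕ) (hm : 1 ≤ m)
    (hdi : jacoDeg m c n i = m * i + c)
    (hdi1 : jacoDeg m c n (i + 1) = m * (i + 1) + c)
    (hi'arc : JacoArc m c i i')
    (hi'max : ∀ t : ℕ, t ≤ n → JacoArc m c i t → t ≤ i')
    (hj'arc : JacoArc m c (i + 1) j')
    (hj'max : ∀ t : ℕ, t ≤ n → JacoArc m c (i + 1) t → t ≤ j') :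
    j' - i' = m ∨ j' - i' = m + 1 := by
  obtain rfl := eq_jacoMaxHead_of_forall_le hi'arc (jacoMaxHead_le_of_jacoDeg_eq hi'arc hdi) hi'max
  obtain rfl := eq_jacoMaxHead_of_forall_le hj'arc (jacoMaxHead_le_of_jacoDeg_eq hj'arc hdi1) hj'max
  have harc : JacoArc m c i (i + 1) := by
    rw [jacoArc_iff] at hi'arc ⊢
    omega
  rcases jacoMaxHead_succ hm harc with h | h <;> omega

/-- If `d(v_i) = f(i)` and `d(v_{i+1}) = f(i+1)` in `J_n(mx+c)` and `i'`, `j'` are the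
maximal indices with arcs `(v_i, v_{i'})` and `(v_{i+1}, v_{j'})`, then `j' - i' ∈ {m, m+1}`. -/
theorem jaco_full_degree_heads (m c n i i' j' : ℕ) (hm : 1 ≤ m)
    (hdi : jacoDeg m c n i = m * i + c)
    (hdi1 : jacoDeg m c n (i + 1) = m * (i + 1) + c)
    (hi'arc : JacoArc m c i i') (hi'n : i' ≤ n)
    (hi'max : ∀ t : ℕ, t ≤ n → JacoArc m c i t → t ≤ i')
    (hj'arc : JacoArc m c (i + 1) j') (hj'n : j' ≤ n)
    (hj'max : ∀ t : ℕ, t ≤ n → JacoArc m c (i + 1) t → t ≤ j') :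
    j' - i' = m ∨ j' - i' = m + 1 :=
  jaco_full_degree_heads_general m c n i i' j' hm hdi hdi1 hi'arc hi'max hj'arc hj'max
end
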